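/- arXiv:2003.04874 — 2 statements merged into one kernel-verified Lean document; each statement's English description precedes it below -/
import Mathlib

section
/- For vectors e ∈ ℝⁿ, ŵ ∈ ℝⁿ and λ ≥ 0, with Ω = {ω ∈ ℝⁿ : Gω ≤ h} a nonempty polyhedron, sup_{ω∈Ω} { eᵀω − λ‖ω − ŵ‖ } = inf { (e − Gᵀη)ᵀŵ + ηᵀh : η ≥ 0, ‖e − Gᵀη‖ ≤ λ }, where the infimum over an empty feasible set is +∞ and the dual norm is used appropriately; in particular the left side equals inf_{‖z‖≤λ} { zᵀŵ + sup_{ω∈Ω} (e − z)ᵀω }. -/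
open scoped Matrix

/-- The Euclidean (ℓ²) norm on `Fin n → ℝ`; it is its own dual norm. -/
noncomputable def l2norm {n : ℕ} (v : Fin n → ℝ) : ℝ :=
  Real.sqrt (dotProduct v v)

/-!
By the dual-norm representation `λ‖v‖ = max_{‖z‖ ≤ λ} zᵀv`, the objective equals
`inf_{‖z‖ ≤ λ} (eᵀω - zᵀ(ω - w))`, whose integrand is affine in `z` and in `ω`. The ball is
compact, so Sion's minimax theorem exchanges `sup_ω` and `inf_z`; this is the second identity.
For fixed `z`, LP strong duality turns `sup_{Gω ≤ h} (e - z)ᵀω` into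
`inf {ηᵀh : η ≥ 0, Gᵀη = e - z}`, and eliminating `z = e - Gᵀη` gives the first identity.

LP strong duality is Farkas' lemma for the cone generated by the pairs `(Gᵢ, hᵢ)` and `(0, 1)`.
That cone is closed, because Carathéodory's argument writes it as a finite union of cones over
linearly independent generators. So if `(c, T)` were outside it, a separating functional would
give a ray in the polyhedron along which `cᵀω` exceeds the bound `T`.
-/

section L2Norm

variable {n : ℕ}

theorem l2norm_nonneg (v : Fin n → ℝ) : 0 ≤ l2norm v := Real.sqrt_nonneg _

theorem l2norm_eq_norm (v : Fin n → ℝ) : l2norm v = ‖WithLp.toLp 2 v‖ := by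
  simp [l2norm, EuclideanSpace.norm_eq, dotProduct, sq]

theorem dotProduct_eq_inner (u v : Fin n → ℝ) :
    u ⬝ᵥ v = inner ℝ (WithLp.toLp 2 u) (WithLp.toLp 2 v) := by
  simp [EuclideanSpace.inner_eq_star_dotProduct, dotProduct_comm]

theorem dotProduct_le_l2norm_mul (u v : Fin n → ℝ) : u ⬝ᵥ v ≤ l2norm u * l2norm v := by
  rw [dotProduct_eq_inner, l2norm_eq_norm, l2norm_eq_norm]
  exact real_inner_le_norm _ _

theorem l2norm_smul (c : ℝ) (v : Fin n → ℝ) : l2norm (c • v) = |c| * l2norm v := by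
  rw [l2norm_eq_norm, l2norm_eq_norm, WithLp.toLp_smul, norm_smul, Real.norm_eq_abs]

theorem exists_l2norm_le_dotProduct_eq {lam : ℝ} (hlam : 0 ≤ lam) (v : Fin n → ℝ) :
    ∃ z : Fin n → ℝ, l2norm z ≤ lam ∧ z ⬝ᵥ v = lam * l2norm v := by
  rcases eq_or_ne (l2norm v) 0 with hv | hv
  · exact ⟨0, by simpa [l2norm] using hlam, by simp [hv]⟩
  refine ⟨(lam / l2norm v) • v, ?_, ?_⟩
  · rw [l2norm_smul, abs_of_nonneg (div_nonneg hlam (l2norm_nonneg v)), div_mul_cancel₀ _ hv]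
  · rw [smul_dotProduct, smul_eq_mul, dotProduct_eq_inner, real_inner_self_eq_norm_sq,
      ← l2norm_eq_norm]
    field_simp

theorem setOf_l2norm_le_eq_preimage (lam : ℝ) :
    {z : Fin n → ℝ | l2norm z ≤ lam} =
      (EuclideanSpace.equiv (Fin n) ℝ).symm ⁻¹' Metric.closedBall 0 lam := by
  ext z
  simp [l2norm_eq_norm]

theorem isCompact_setOf_l2norm_le (lam : ℝ) : IsCompact {z : Fin n → ℝ | l2norm z ≤ lam} := by
  rw [setOf_l2norm_le_eq_preimage]
  exact (EuclideanSpace.equiv (Fin n) ℝ).symm.toHomeomorph.isCompact_preimage.mpr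
    (isCompact_closedBall 0 lam)

theorem convex_setOf_l2norm_le (lam : ℝ) : Convex ℝ {z : Fin n → ℝ | l2norm z ≤ lam} := by
  rw [setOf_l2norm_le_eq_preimage]
  exact (convex_closedBall 0 lam).linear_preimage
    (EuclideanSpace.equiv (Fin n) ℝ).symm.toLinearMap

end L2Norm

namespace EReal

theorem coe_neg_add_cancel_left (a : ℝ) (x : EReal) : ((-a : ℝ) : EReal) + (a + x) = x := by
  rw [← add_assoc, ← coe_add, neg_add_cancel, coe_zero, zero_add]

noncomputable def coeAddOrderIso (a : ℝ) : EReal ≃o EReal where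
  toFun x := a + x
  invFun x := (-a : ℝ) + x
  left_inv := coe_neg_add_cancel_left a
  right_inv x := by simpa only [neg_neg] using coe_neg_add_cancel_left (-a) x
  map_rel_iff' {x y} := by
    simp only [Equiv.coe_fn_mk]
    refine ⟨fun h => ?_, fun h => add_le_add_right h _⟩
    simpa only [coe_neg_add_cancel_left] using add_le_add_right h ((-a : ℝ) : EReal)

theorem coeAddOrderIso_apply (a : ℝ) (x : EReal) : coeAddOrderIso a x = a + x := rfl

theorem coe_add_biSup {α : Type*} (a : ℝ) (s : Set α) (f : α → EReal) :
    (a : EReal) + ⨆ x ∈ s, f x = ⨆ x ∈ s, ((a : EReal) + f x) := by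
  simpa only [coeAddOrderIso_apply] using (coeAddOrderIso a).map_iSup₂ fun x (_ : x ∈ s) => f x

theorem coe_add_biInf {α : Type*} (a : ℝ) (s : Set α) (f : α → EReal) :
    (a : EReal) + ⨅ x ∈ s, f x = ⨅ x ∈ s, ((a : EReal) + f x) := by
  simpa only [coeAddOrderIso_apply] using (coeAddOrderIso a).map_iInf₂ fun x (_ : x ∈ s) => f x

end EReal

section Minimax

variable {n : ℕ}

theorem biInf_sub_dotProduct_eq_sub_mul_l2norm {lam : ℝ} (hlam : 0 ≤ lam) (a : ℝ) (v : Fin n → ℝ) :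
    ⨅ z ∈ {z : Fin n → ℝ | l2norm z ≤ lam}, ((a - z ⬝ᵥ v : ℝ) : EReal) =
      ((a - lam * l2norm v : ℝ) : EReal) := by
  obtain ⟨z₀, hz₀, hz₀v⟩ := exists_l2norm_le_dotProduct_eq hlam v
  refine le_antisymm (iInf₂_le_of_le z₀ hz₀ (by rw [hz₀v])) (le_iInf₂ fun z hz => ?_)
  have := (dotProduct_le_l2norm_mul z v).trans (mul_le_mul_of_nonneg_right hz (l2norm_nonneg v))
  exact EReal.coe_le_coe_iff.mpr (by linarith)

theorem quasilinearOn_coe_dotProduct_add {s : Set (Fin n → ℝ)} (hs : Convex ℝ s)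
    (u : Fin n → ℝ) (b : ℝ) :
    QuasilinearOn ℝ s fun x => ((u ⬝ᵥ x + b : ℝ) : EReal) := by
  have hconv : ConvexOn ℝ s fun x => u ⬝ᵥ x + b :=
    ⟨hs, fun x _ y _ p q _ _ hpq => le_of_eq (by
      simp only [dotProduct_add, dotProduct_smul, smul_eq_mul]; linear_combination b * hpq.symm)⟩
  have hconc : ConcaveOn ℝ s fun x => u ⬝ᵥ x + b :=
    ⟨hs, fun x _ y _ p q _ _ hpq => le_of_eq (by
      simp only [dotProduct_add, dotProduct_smul, smul_eq_mul]; linear_combination b * hpq)⟩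
  exact ⟨hconv.quasiconvexOn.monotone_comp (g := Real.toEReal) EReal.coe_strictMono.monotone,
    hconc.quasiconcaveOn.monotone_comp (g := Real.toEReal) EReal.coe_strictMono.monotone⟩

theorem iSup_sub_mul_l2norm_eq_iInf {Ω : Set (Fin n → ℝ)} (hΩ : Convex ℝ Ω) (e w : Fin n → ℝ)
    {lam : ℝ} (hlam : 0 ≤ lam) :
    ⨆ ω ∈ Ω, ((e ⬝ᵥ ω - lam * l2norm (ω - w) : ℝ) : EReal) =
      ⨅ z ∈ {z : Fin n → ℝ | l2norm z ≤ lam},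
        (((z ⬝ᵥ w : ℝ) : EReal) + ⨆ ω ∈ Ω, (((e - z) ⬝ᵥ ω : ℝ) : EReal)) := by
  set B := {z : Fin n → ℝ | l2norm z ≤ lam}
  let F : (Fin n → ℝ) → (Fin n → ℝ) → EReal := fun z ω => (z ⬝ᵥ w + (e - z) ⬝ᵥ ω : ℝ)
  have hF : Continuous fun p : (Fin n → ℝ) × (Fin n → ℝ) => F p.1 p.2 :=
    continuous_coe_real_ereal.comp (by fun_prop)
  have hF_z (ω : Fin n → ℝ) : QuasilinearOn ℝ B (F · ω) := by
    convert quasilinearOn_coe_dotProduct_add (convex_setOf_l2norm_le lam) (w - ω) (e ⬝ᵥ ω)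
      using 3 with z
    simp only [sub_dotProduct, dotProduct_comm z]
    ring
  have hF_ω (z : Fin n → ℝ) : QuasilinearOn ℝ Ω (F z) := by
    convert quasilinearOn_coe_dotProduct_add hΩ (e - z) (z ⬝ᵥ w) using 3
    exact add_comm _ _
  have minimax := Sion.minimax' (f := F) ⟨0, by simpa [B, l2norm] using hlam⟩
    (convex_setOf_l2norm_le lam) (isCompact_setOf_l2norm_le lam)
    (fun ω _ => (hF.comp (.prodMk_left ω)).lowerSemicontinuous.lowerSemicontinuousOn _)
    (fun ω _ => (hF_z ω).1) hΩ
    (fun z _ => (hF.comp (.prodMk_right z)).upperSemicontinuous.upperSemicontinuousOn _)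
    (fun z _ => (hF_ω z).2)
  calc ⨆ ω ∈ Ω, ((e ⬝ᵥ ω - lam * l2norm (ω - w) : ℝ) : EReal)
      = ⨆ ω ∈ Ω, ⨅ z ∈ B, F z ω := biSup_congr fun ω _ => by
        rw [← biInf_sub_dotProduct_eq_sub_mul_l2norm hlam]
        refine biInf_congr fun z _ => ?_
        simp only [F, dotProduct_sub, sub_dotProduct]
        congr 1
        ring
    _ = ⨅ z ∈ B, ⨆ ω ∈ Ω, F z ω := minimax.symm
    _ = _ := biInf_congr fun z _ => by simp only [F, EReal.coe_add, EReal.coe_add_biSup]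

end Minimax

section FiniteCone

variable {ι E : Type*} [AddCommGroup E] [Module ℝ E]

def finiteCone (v : ι → E) (s : Finset ι) : Set E :=
  {x | ∃ c : ι → ℝ, (∀ i ∈ s, 0 ≤ c i) ∧ ∑ i ∈ s, c i • v i = x}

theorem finiteCone_mono (v : ι → E) {s t : Finset ι} (hst : s ⊆ t) :
    finiteCone v s ⊆ finiteCone v t := by
  classical
  rintro _ ⟨c, hc, rfl⟩
  refine ⟨fun i => if i ∈ s then c i else 0, fun i _ => ?_, ?_⟩
  · dsimp only
    split_ifs with hi
    exacts [hc i hi, le_rfl]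
  · rw [← Finset.sum_subset hst fun i _ hi => by simp [hi]]
    exact Finset.sum_congr rfl fun i hi => by simp [hi]

theorem convex_finiteCone (v : ι → E) (s : Finset ι) : Convex ℝ (finiteCone v s) := by
  rintro _ ⟨c, hc, rfl⟩ _ ⟨d, hd, rfl⟩ a b ha hb _
  refine ⟨a • c + b • d, fun i hi => ?_, ?_⟩
  · simp only [Pi.add_apply, Pi.smul_apply, smul_eq_mul]
    have := hc i hi; have := hd i hi; positivity
  · simp only [Pi.add_apply, Pi.smul_apply, smul_eq_mul, add_smul, mul_smul,
      Finset.sum_add_distrib, Finset.smul_sum]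

theorem smul_mem_finiteCone (v : ι → E) {s : Finset ι} {i : ι} (hi : i ∈ s) {t : ℝ}
    (ht : 0 ≤ t) : t • v i ∈ finiteCone v s := by
  classical
  refine ⟨fun j => if j = i then t else 0, fun j _ => ?_, by simp [ite_smul, hi]⟩
  dsimp only
  split_ifs
  exacts [ht, le_rfl]

theorem exists_mem_finiteCone_erase [DecidableEq ι] {v : ι → E} {s : Finset ι} {x : E}
    (hs : ¬LinearIndepOn ℝ v s) (hx : x ∈ finiteCone v s) :
    ∃ j ∈ s, x ∈ finiteCone v (s.erase j) := by
  obtain ⟨c, hc, rfl⟩ := hx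
  obtain ⟨g, hg, hpos⟩ : ∃ g : ι → ℝ, ∑ i ∈ s, g i • v i = 0 ∧ {i ∈ s | 0 < g i}.Nonempty := by
    obtain ⟨f, hf, i, hi, hfi⟩ := not_linearIndepOn_finset_iff.mp hs
    rcases hfi.lt_or_gt with hneg | hpos
    · exact ⟨-f, by simp [neg_smul, hf], i, by simp [hi, hneg]⟩
    · exact ⟨f, hf, i, by simp [hi, hpos]⟩
  obtain ⟨j, hj, hmin⟩ := Finset.exists_min_image _ (fun i => c i / g i) hpos
  rw [Finset.mem_filter] at hj
  refine ⟨j, hj.1, fun i => c i - c j / g j * g i, fun i hi => ?_, ?_⟩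
  · have hi := Finset.mem_of_mem_erase hi
    by_cases hgi : 0 < g i
    · have := hmin i (Finset.mem_filter.mpr ⟨hi, hgi⟩)
      rw [le_div_iff₀ hgi] at this
      linarith
    · have := hc i hi
      have := div_nonneg (hc j hj.1) hj.2.le
      nlinarith
  · rw [Finset.sum_erase s (f := fun i => (c i - c j / g j * g i) • v i)
      (by rw [div_mul_cancel₀ _ hj.2.ne', sub_self, zero_smul])]
    simp only [sub_smul, mul_smul, Finset.sum_sub_distrib, ← Finset.smul_sum, hg, smul_zero,
      sub_zero]

theorem exists_linearIndepOn_of_mem_finiteCone {v : ι → E} {s : Finset ι} {x : E}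
    (hx : x ∈ finiteCone v s) : ∃ t ⊆ s, LinearIndepOn ℝ v t ∧ x ∈ finiteCone v t := by
  classical
  induction s using Finset.strongInduction with
  | H s ih =>
    by_cases hs : LinearIndepOn ℝ v s
    · exact ⟨s, subset_rfl, hs, hx⟩
    obtain ⟨j, hj, hxj⟩ := exists_mem_finiteCone_erase hs hx
    obtain ⟨t, hts, ht, hxt⟩ := ih _ (Finset.erase_ssubset hj) hxj
    exact ⟨t, hts.trans (Finset.erase_subset j s), ht, hxt⟩

theorem finiteCone_eq_image (v : ι → E) (t : Finset ι) :
    finiteCone v t = Fintype.linearCombination ℝ (fun i : t => v i) '' Set.Ici 0 := by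
  classical
  ext x
  simp only [finiteCone, Set.mem_ofPred_eq, Set.mem_image, Set.mem_Ici,
    Fintype.linearCombination_apply]
  constructor
  · rintro ⟨c, hc, rfl⟩
    exact ⟨fun i => c i, fun i => hc i i.2, Finset.sum_coe_sort t fun i => c i • v i⟩
  · rintro ⟨d, hd, rfl⟩
    refine ⟨fun i => if hi : i ∈ t then d ⟨i, hi⟩ else 0,
      fun i hi => by simpa [hi] using hd ⟨i, hi⟩, ?_⟩
    rw [← Finset.sum_coe_sort t]
    exact Finset.sum_congr rfl fun i _ => by simp

variable [TopologicalSpace E] [IsTopologicalAddGroup E] [ContinuousSMul ℝ E] [T2Space E]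

theorem isClosed_finiteCone_of_linearIndepOn {v : ι → E} {t : Finset ι}
    (ht : LinearIndepOn ℝ v t) : IsClosed (finiteCone v t) := by
  rw [finiteCone_eq_image]
  exact (LinearMap.isClosedEmbedding_of_injective (LinearMap.ker_eq_bot.mpr
    (LinearIndependent.fintypeLinearCombination_injective ht))).isClosedMap _ isClosed_Ici

theorem isClosed_finiteCone (v : ι → E) (s : Finset ι) : IsClosed (finiteCone v s) := by
  classical
  have : finiteCone v s =
      ⋃ t ∈ s.powerset.filter fun t : Finset ι => LinearIndepOn ℝ v ↑t, finiteCone v t := by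
    ext x
    simp only [Set.mem_iUnion, Finset.mem_filter, Finset.mem_powerset, exists_prop]
    refine ⟨fun hx => ?_, fun ⟨t, ⟨hts, _⟩, hxt⟩ => finiteCone_mono v hts hxt⟩
    obtain ⟨t, hts, ht, hxt⟩ := exists_linearIndepOn_of_mem_finiteCone hx
    exact ⟨t, ⟨hts, ht⟩, hxt⟩
  rw [this]
  exact isClosed_biUnion_finset fun t ht =>
    isClosed_finiteCone_of_linearIndepOn (Finset.mem_filter.mp ht).2

theorem exists_dual_nonneg_of_notMem_finiteCone [LocallyConvexSpace ℝ E] {v : ι → E}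
    {s : Finset ι} {x : E} (hx : x ∉ finiteCone v s) :
    ∃ f : StrongDual ℝ E, (∀ i ∈ s, 0 ≤ f (v i)) ∧ f x < 0 := by
  obtain ⟨f, u, hfx, hfu⟩ :=
    geometric_hahn_banach_point_closed (convex_finiteCone v s) (isClosed_finiteCone v s) hx
  have hu : u < 0 := by simpa using hfu 0 ⟨0, fun _ _ => le_rfl, by simp⟩
  refine ⟨f, fun i hi => ?_, hfx.trans hu⟩
  by_contra! hneg
  have := hfu _ (smul_mem_finiteCone v hi (div_nonneg_of_nonpos hu.le hneg.le))
  rw [map_smul, smul_eq_mul, div_mul_cancel₀ _ hneg.ne] at this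
  exact this.false

end FiniteCone

section LinearProgramming

variable {ι κ : Type*}

theorem convex_polyhedron [Fintype κ] (G : Matrix ι κ ℝ) (h : ι → ℝ) :
    Convex ℝ {ω : κ → ℝ | ∀ i, (G *ᵥ ω) i ≤ h i} :=
  (convex_Iic h).linear_preimage G.mulVecLin

theorem dotProduct_le_of_dual_feasible [Fintype ι] [Fintype κ] {G : Matrix ι κ ℝ} {h : ι → ℝ}
    {ω : κ → ℝ} {η : ι → ℝ} (hω : ∀ i, (G *ᵥ ω) i ≤ h i) (hη : ∀ i, 0 ≤ η i) :
    (Gᵀ *ᵥ η) ⬝ᵥ ω ≤ η ⬝ᵥ h := by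
  rw [Matrix.mulVec_transpose, ← Matrix.dotProduct_mulVec]
  exact dotProduct_le_dotProduct_of_nonneg_left hω hη

theorem exists_feasible_lt_dotProduct_of_ray [Fintype κ] {G : Matrix ι κ ℝ} {h : ι → ℝ} {ω₀ : κ → ℝ}
    (hω₀ : ∀ i, (G *ᵥ ω₀) i ≤ h i) {c y : κ → ℝ} {s T : ℝ} (hs : 0 ≤ s)
    (hy : ∀ i, 0 ≤ (G *ᵥ y) i + s * h i) (hcy : c ⬝ᵥ y + s * T < 0) :
    ∃ ω, (∀ i, (G *ᵥ ω) i ≤ h i) ∧ T < c ⬝ᵥ ω := by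
  -- Move from `ω₀` along `-y` and rescale: `-y` is a recession direction when `s = 0`, and
  -- `-y / s` is feasible when `s > 0`; the same formula covers both cases.
  set t := (|c ⬝ᵥ ω₀ - T| + 1) / -(c ⬝ᵥ y + s * T)
  have ht : 0 ≤ t := div_nonneg (by positivity) (by linarith)
  have ht_mul : t * -(c ⬝ᵥ y + s * T) = |c ⬝ᵥ ω₀ - T| + 1 := div_mul_cancel₀ _ (by linarith)
  have hts : 0 < 1 + t * s := by positivity
  refine ⟨(1 + t * s)⁻¹ • (ω₀ - t • y), fun i => ?_, ?_⟩
  · rw [Matrix.mulVec_smul, Matrix.mulVec_sub, Matrix.mulVec_smul]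
    simp only [Pi.smul_apply, Pi.sub_apply, smul_eq_mul]
    rw [inv_mul_le_iff₀ hts]
    nlinarith [hω₀ i, hy i]
  · rw [dotProduct_smul, dotProduct_sub, dotProduct_smul, smul_eq_mul, smul_eq_mul,
      lt_inv_mul_iff₀ hts]
    linarith [neg_abs_le (c ⬝ᵥ ω₀ - T)]

theorem exists_dotProduct_add_mul_eq [Fintype κ] (f : StrongDual ℝ ((κ → ℝ) × ℝ)) :
    ∃ y : κ → ℝ, ∀ x r, f (x, r) = x ⬝ᵥ y + r * f (0, 1) := by
  classical
  refine ⟨fun j => f (fun k => if j = k then 1 else 0, 0), fun x r => ?_⟩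
  have hsplit : f (x, r) = f (x, 0) + r * f (0, 1) := by
    rw [← smul_eq_mul, ← map_smul, ← map_add, Prod.smul_mk, smul_zero, smul_eq_mul, mul_one,
      Prod.mk_add_mk, add_zero, zero_add]
  have hx := LinearMap.pi_apply_eq_sum_univ (f.toLinearMap.comp (LinearMap.inl ℝ (κ → ℝ) ℝ)) x
  simp only [LinearMap.comp_apply, LinearMap.inl_apply, ContinuousLinearMap.coe_coe] at hx
  rw [hsplit, hx]
  simp [dotProduct]

def lpGenerators (G : Matrix ι κ ℝ) (h : ι → ℝ) : Option ι → (κ → ℝ) × ℝ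
  | none => (0, 1)
  | some i => (G i, h i)

theorem exists_dual_feasible_of_mem_finiteCone [Fintype ι] {G : Matrix ι κ ℝ} {h : ι → ℝ}
    {c : κ → ℝ} {T : ℝ} (hcT : (c, T) ∈ finiteCone (lpGenerators G h) Finset.univ) :
    ∃ η : ι → ℝ, (∀ i, 0 ≤ η i) ∧ Gᵀ *ᵥ η = c ∧ η ⬝ᵥ h ≤ T := by
  obtain ⟨θ, hθ, hsum⟩ := hcT
  simp only [Fintype.sum_option, lpGenerators, Prod.smul_mk, Prod.ext_iff, Prod.fst_add,
    Prod.snd_add, Prod.fst_sum, Prod.snd_sum, smul_zero, zero_add, smul_eq_mul, mul_one] at hsum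
  refine ⟨fun i => θ (some i), fun i => hθ _ (Finset.mem_univ _), ?_, ?_⟩
  · rw [Matrix.mulVec_transpose, Matrix.vecMul_eq_sum, hsum.1]
  · have := hθ none (Finset.mem_univ _)
    rw [dotProduct]
    linarith [hsum.2]

theorem exists_dual_feasible_le [Fintype ι] [Fintype κ] {G : Matrix ι κ ℝ} {h : ι → ℝ}
    {c : κ → ℝ} {T : ℝ}
    (hne : {ω : κ → ℝ | ∀ i, (G *ᵥ ω) i ≤ h i}.Nonempty)
    (hT : ∀ ω, (∀ i, (G *ᵥ ω) i ≤ h i) → c ⬝ᵥ ω ≤ T) :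
    ∃ η : ι → ℝ, (∀ i, 0 ≤ η i) ∧ Gᵀ *ᵥ η = c ∧ η ⬝ᵥ h ≤ T := by
  by_cases hcT : (c, T) ∈ finiteCone (lpGenerators G h) Finset.univ
  · exact exists_dual_feasible_of_mem_finiteCone hcT
  obtain ⟨f, hf, hfcT⟩ := exists_dual_nonneg_of_notMem_finiteCone hcT
  obtain ⟨y, hy⟩ := exists_dotProduct_add_mul_eq f
  obtain ⟨ω₀, hω₀⟩ := hne
  have hrow (i : ι) : 0 ≤ (G *ᵥ y) i + f (0, 1) * h i := by
    have := hf (some i) (Finset.mem_univ _)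
    rw [lpGenerators, hy, mul_comm] at this
    exact this
  obtain ⟨ω, hω, hTω⟩ := exists_feasible_lt_dotProduct_of_ray hω₀
    (hf none (Finset.mem_univ _)) hrow (by rwa [hy, mul_comm] at hfcT)
  exact absurd (hT ω hω) hTω.not_ge

theorem iSup_dotProduct_polyhedron_eq_iInf [Fintype ι] [Fintype κ] {G : Matrix ι κ ℝ} {h : ι → ℝ}
    (hne : {ω : κ → ℝ | ∀ i, (G *ᵥ ω) i ≤ h i}.Nonempty) (c : κ → ℝ) :
    ⨆ ω ∈ {ω : κ → ℝ | ∀ i, (G *ᵥ ω) i ≤ h i}, ((c ⬝ᵥ ω : ℝ) : EReal) =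
      ⨅ η ∈ {η : ι → ℝ | (∀ i, 0 ≤ η i) ∧ Gᵀ *ᵥ η = c}, ((η ⬝ᵥ h : ℝ) : EReal) := by
  refine le_antisymm (iSup₂_le fun ω hω => le_iInf₂ fun η ⟨hη, hηc⟩ =>
    EReal.coe_le_coe_iff.mpr (hηc ▸ dotProduct_le_of_dual_feasible hω hη)) ?_
  refine EReal.le_of_forall_lt_iff_le.mp fun T hT => ?_
  obtain ⟨η, hη, hηc, hηT⟩ := exists_dual_feasible_le hne fun ω hω =>
    EReal.coe_le_coe_iff.mp ((le_iSup₂ (f := fun ω (_ : ω ∈ {ω : κ → ℝ | ∀ i, (G *ᵥ ω) i ≤ h i}) =>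
      ((c ⬝ᵥ ω : ℝ) : EReal)) ω hω).trans hT.le)
  exact (iInf₂_le η ⟨hη, hηc⟩).trans (EReal.coe_le_coe_iff.mpr hηT)

end LinearProgramming

theorem biInf_biInf_fiber_eq {α β γ : Type*} [CompleteLattice γ] (B : Set α) (P : β → Prop)
    (A : β → α) (F : α → β → γ) :
    ⨅ z ∈ B, ⨅ η ∈ {η | P η ∧ A η = z}, F z η = ⨅ η ∈ {η | P η ∧ A η ∈ B}, F (A η) η := by
  refine le_antisymm (le_iInf₂ fun η hη => iInf₂_le_of_le (A η) hη.2 (iInf₂_le η ⟨hη.1, rfl⟩))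
    (le_iInf₂ fun z hz => le_iInf₂ fun η hη => ?_)
  obtain ⟨hP, rfl⟩ := hη
  exact iInf₂_le η ⟨hP, hz⟩

/-- Duality between the norm-penalized linear maximization over a nonempty
polyhedron `Ω = {ω : Gω ≤ h}` and the corresponding dual program, together with
the intermediate dual-norm representation. -/
theorem sup_polyhedron_norm_penalty_duality {n m : ℕ}
    (G : Matrix (Fin m) (Fin n) ℝ) (h : Fin m → ℝ) (e w : Fin n → ℝ)
    (lam : ℝ) (hlam : 0 ≤ lam)
    (hne : {ω : Fin n → ℝ | ∀ i, G.mulVec ω i ≤ h i}.Nonempty) :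
    (⨆ ω ∈ {ω : Fin n → ℝ | ∀ i, G.mulVec ω i ≤ h i},
        ((dotProduct e ω - lam * l2norm (ω - w) : ℝ) : EReal))
      = (⨅ η ∈ {η : Fin m → ℝ | (∀ i, 0 ≤ η i) ∧
            l2norm (e - G.transpose.mulVec η) ≤ lam},
          ((dotProduct (e - G.transpose.mulVec η) w
            + dotProduct η h : ℝ) : EReal))
    ∧
    (⨆ ω ∈ {ω : Fin n → ℝ | ∀ i, G.mulVec ω i ≤ h i},
        ((dotProduct e ω - lam * l2norm (ω - w) : ℝ) : EReal))
      = ⨅ z ∈ {z : Fin n → ℝ | l2norm z ≤ lam},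
          (((dotProduct z w : ℝ) : EReal)
            + ⨆ ω ∈ {ω : Fin n → ℝ | ∀ i, G.mulVec ω i ≤ h i},
                ((dotProduct (e - z) ω : ℝ) : EReal)) := by
  have minimax := iSup_sub_mul_l2norm_eq_iInf (convex_polyhedron G h) e w hlam
  refine ⟨?_, minimax⟩
  have hfiber (z : Fin n → ℝ) (η : Fin m → ℝ) : Gᵀ *ᵥ η = e - z ↔ e - Gᵀ *ᵥ η = z :=
    ⟨fun hη => by rw [hη, sub_sub_cancel], fun hη => by rw [← hη, sub_sub_cancel]⟩
  calc _ = ⨅ z ∈ {z : Fin n → ℝ | l2norm z ≤ lam},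
          ⨅ η ∈ {η : Fin m → ℝ | (∀ i, 0 ≤ η i) ∧ e - Gᵀ *ᵥ η = z},
            ((z ⬝ᵥ w + η ⬝ᵥ h : ℝ) : EReal) := by
        rw [minimax]
        refine biInf_congr fun z _ => ?_
        simp only [iSup_dotProduct_polyhedron_eq_iInf hne, EReal.coe_add_biInf, EReal.coe_add,
          hfiber]
    _ = _ := biInf_biInf_fiber_eq _ (fun η => ∀ i, 0 ≤ η i) (fun η => e - Gᵀ *ᵥ η)
        fun z η => ((z ⬝ᵥ w + η ⬝ᵥ h : ℝ) : EReal)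
end

section
/- Robust box-constraint feasibility implies distributionally robust joint chance-constraint feasibility: let ω be an ℝⁿ-valued random vector and suppose for each j ∈ [n] and every distribution P in a family M, P(ω_j ∉ [y̲_j, ȳ_j]) ≤ α/n. If x satisfies Dx + Eω ≤ f for every ω in the hyper-rectangle Ω* = Π_j [y̲_j, ȳ_j], then inf_{P∈M} P(Dx + Eω ≤ f) ≥ 1 − α. -/
open MeasureTheory

/-- If for every distribution `P` in the family `M` each component `ω_j` lies in
`[y̲_j, ȳ_j]` except with probability at most `α/n`, and `x` satisfies
`Dx + Eω ≤ f` for every `ω` in the hyper-rectangle, then `x` satisfies the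
distributionally robust joint chance-constraint at level `1 − α`. -/
theorem robust_box_implies_drcc {n nx K : ℕ}
    (M : Set (Measure (Fin n → ℝ))) (hprob : ∀ P ∈ M, IsProbabilityMeasure P)
    (D : Matrix (Fin K) (Fin nx) ℝ) (E : Matrix (Fin K) (Fin n) ℝ)
    (f : Fin K → ℝ) (yl yu : Fin n → ℝ) (α : ℝ) (hα : α ∈ Set.Ioo (0 : ℝ) 1)
    (hmarg : ∀ j : Fin n, ∀ P ∈ M,
      P {ω : Fin n → ℝ | ω j ∉ Set.Icc (yl j) (yu j)} ≤ ENNReal.ofReal (α / n))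
    (x : Fin nx → ℝ)
    (hrob : ∀ ω : Fin n → ℝ, (∀ j, ω j ∈ Set.Icc (yl j) (yu j)) →
      ∀ k, D.mulVec x k + E.mulVec ω k ≤ f k) :
    ∀ P ∈ M, ENNReal.ofReal (1 - α)
      ≤ P {ω : Fin n → ℝ | ∀ k, D.mulVec x k + E.mulVec ω k ≤ f k} := by
  intro P hP
  haveI := hprob P hP
  set U : Set (Fin n → ℝ) := ⋃ j, {ω : Fin n → ℝ | ω j ∉ Set.Icc (yl j) (yu j)} with hU
  have hUmeas : MeasurableSet U := by
    apply MeasurableSet.iUnion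
    intro j
    exact (measurableSet_Icc.preimage (measurable_pi_apply j)).compl
  -- U complement is contained in the feasible set
  have hsub : Uᶜ ⊆ {ω : Fin n → ℝ | ∀ k, D.mulVec x k + E.mulVec ω k ≤ f k} := by
    intro ω hω
    simp only [hU, Set.compl_iUnion, Set.mem_iInter, Set.mem_compl_iff, Set.mem_setOf_eq,
      not_not] at hω
    exact hrob ω hω
  have hUle : P U ≤ ENNReal.ofReal α := by
    calc P U ≤ ∑ j : Fin n, P {ω : Fin n → ℝ | ω j ∉ Set.Icc (yl j) (yu j)} :=
          measure_iUnion_fintype_le P _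
      _ ≤ ∑ _j : Fin n, ENNReal.ofReal (α / n) :=
          Finset.sum_le_sum fun j _ => hmarg j P hP
      _ ≤ ENNReal.ofReal α := by
          rcases Nat.eq_zero_or_pos n with h0 | hpos
          · subst h0; simp
          · rw [Finset.sum_const, Finset.card_univ, Fintype.card_fin, nsmul_eq_mul,
              ← ENNReal.ofReal_natCast, ← ENNReal.ofReal_mul (by positivity)]
            apply ENNReal.ofReal_le_ofReal
            rw [mul_div_cancel₀]
            positivity
  have hcompl : ENNReal.ofReal (1 - α) ≤ P Uᶜ := by
    rw [measure_compl hUmeas (measure_ne_top P U)]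
    have h1 : ENNReal.ofReal (1 - α) = 1 - ENNReal.ofReal α := by
      rw [ENNReal.ofReal_sub 1 hα.1.le, ENNReal.ofReal_one]
    rw [h1, measure_univ]
    exact tsub_le_tsub_left hUle 1
  exact le_trans hcompl (measure_mono hsub)
end
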